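/- arXiv:1912.02127 — 3 statements merged into one kernel-verified Lean document; each statement's English description precedes it below -/
import Mathlib

section
/- The database mapping DM₂ = (SM₂, IM₂) is semantics preserving: for every RDF graph G^R, assuming type(v) = String for every IRI and every literal v regarded as a value, the output IM₂(G^R) is a well-formed property graph (finite mutually disjoint node/edge/property sets, total Γ, Υ, Σ, and Δ assigning non-empty pairwise-disjoint property sets) and IM₂(G^R) is valid with respect to the generic property graph schema S*; hence (S*, IM₂(G^R)) is a valid property graph database. -/
/-! Formalization of RDF databases, Property Graph databases, and the
database mappings DM₁ = (SM₁, IM₁) and DM₂ = (SM₂, IM₂) from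
"Mapping RDF Databases to Property Graph Databases". -/

/-- The ambient context: the sets I (IRIs), L (literals), 𝕃 (labels),
𝕍 (values), 𝕋 (datatypes), the datatype IRIs I_DT, the reserved vocabulary
I_V, the inclusions I ⊆ 𝕃, I ⊆ 𝕍, L ⊆ 𝕍 (with retractions), the
distinguished labels, the datatype `String`, the typing function on values,
and the bijection f : I_DT → 𝕋 with inverse f⁻¹. -/
structure Ctx : Type 1 where
  Iri : Type
  Lit : Type
  Lbl : Type
  Val : Type
  DT : Type
  infIri : Infinite Iri
  infLit : Infinite Lit
  infLbl : Infinite Lbl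
  infVal : Infinite Val
  finDT : Finite DT
  IDT : Set Iri
  IV : Set Iri
  iLbl : Iri → Lbl
  iLbl_inj : Function.Injective iLbl
  lblIri : Lbl → Iri
  lblIri_iLbl : ∀ i, lblIri (iLbl i) = i
  iVal : Iri → Val
  iVal_inj : Function.Injective iVal
  valIri : Val → Iri
  valIri_iVal : ∀ i, valIri (iVal i) = i
  lVal : Lit → Val
  lVal_inj : Function.Injective lVal
  valLit : Val → Lit
  valLit_lVal : ∀ l, valLit (lVal l) = l
  iriLbl : Lbl
  typeLbl : Lbl
  valueLbl : Lbl
  resLbl : Lbl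
  litLbl : Lbl
  objLbl : Lbl
  dtpLbl : Lbl
  iri_ne_type : iriLbl ≠ typeLbl
  iri_ne_value : iriLbl ≠ valueLbl
  type_ne_value : typeLbl ≠ valueLbl
  res_ne_lit : resLbl ≠ litLbl
  obj_ne_dtp : objLbl ≠ dtpLbl
  stringDT : DT
  typeOf : Val → DT
  f : {i : Iri // i ∈ IDT} → DT
  f_bij : Function.Bijective f
  finv : DT → Iri
  finv_mem : ∀ t, finv t ∈ IDT
  f_finv : ∀ t, f ⟨finv t, finv_mem t⟩ = t
  finv_f : ∀ (i : Iri) (h : i ∈ IDT), finv (f ⟨i, h⟩) = i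

/-- An RDF graph: resource nodes `NI`, literal nodes `NL` (disjoint from `NI`
since they are distinct types), object-property edges `EO`, datatype-property
edges `ED` (disjoint), with `aI`/`aL` the IRI/literal assignments, `bO`/`bD`
the incidence functions, and `dI`, `dL`, `dO`, `dD` the components of the
total class-labeling function δ on the disjoint union NI ∪ NL ∪ EO ∪ ED. -/
structure RDFGraph (C : Ctx) : Type 1 where
  NI : Type
  NL : Type
  EO : Type
  ED : Type
  aI : NI → C.Iri
  aL : NL → C.Lit
  bO : EO → NI × NI
  bD : ED → NI × NL
  dI : NI → C.Iri
  dL : NL → C.Iri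
  dO : EO → C.Iri
  dD : ED → C.Iri

/-- Well-formedness of an RDF graph: finite node and edge sets and
injective α_I and α_L (totality and disjointness are built in). -/
def RDFGraph.WF {C : Ctx} (G : RDFGraph C) : Prop :=
  Finite G.NI ∧ Finite G.NL ∧ Finite G.EO ∧ Finite G.ED ∧
    Function.Injective G.aI ∧ Function.Injective G.aL

/-- An RDF graph schema: resource classes `NS`, property classes `ES`,
the class-IRI assignment φ (components `phiN`, `phiE`) and
ϕ(pc) = (dom pc, rng pc). -/
structure RDFSchema (C : Ctx) : Type 1 where
  NS : Type
  ES : Type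
  phiN : NS → C.Iri
  phiE : ES → C.Iri
  dom : ES → NS
  rng : ES → NS

/-- Well-formedness of an RDF graph schema: finiteness, injectivity of φ on
NS ∪ ES, and φ avoiding the reserved vocabulary I_V. -/
def RDFSchema.WF {C : Ctx} (S : RDFSchema C) : Prop :=
  Finite S.NS ∧ Finite S.ES ∧
    Function.Injective (Sum.elim S.phiN S.phiE) ∧
    (∀ x : S.NS ⊕ S.ES, Sum.elim S.phiN S.phiE x ∉ C.IV)

/-- Validity of an RDF graph w.r.t. an RDF graph schema (G^R ⊨ S^R). -/
def RDFValid (C : Ctx) (G : RDFGraph C) (S : RDFSchema C) : Prop :=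
  (∀ r : G.NI, ∃ rc : S.NS, G.dI r = S.phiN rc) ∧
  (∀ l : G.NL, ∃ rc : S.NS, G.dL l = S.phiN rc) ∧
  (∀ e : G.EO, ∃ pc : S.ES, G.dO e = S.phiE pc ∧
      G.dI (G.bO e).1 = S.phiN (S.dom pc) ∧ G.dI (G.bO e).2 = S.phiN (S.rng pc)) ∧
  (∀ e : G.ED, ∃ pc : S.ES, G.dD e = S.phiE pc ∧
      G.dI (G.bD e).1 = S.phiN (S.dom pc) ∧ G.dL (G.bD e).2 = S.phiN (S.rng pc))

/-- A property graph: nodes `N`, edges `E`, properties `P` (mutually disjoint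
since distinct types), label function Γ (`lab`), property assignment Υ (`pv`),
incidence Σ (`ends`), and the partial function Δ (`props`), encoded as a
set-valued function whose domain is `{o | (props o).Nonempty}`. -/
structure PG (C : Ctx) : Type 1 where
  N : Type
  E : Type
  P : Type
  lab : N ⊕ E → C.Lbl
  pv : P → C.Lbl × C.Val
  ends : E → N × N
  props : N ⊕ E → Set P

/-- Well-formedness of a property graph: finite (mutually disjoint) sets of
nodes, edges and properties; Γ, Υ, Σ total (built in); Δ partial into
non-empty sets (built into the encoding) with pairwise disjoint values. -/
def PG.WF {C : Ctx} (G : PG C) : Prop :=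
  Finite G.N ∧ Finite G.E ∧ Finite G.P ∧
    ∀ o₁ o₂ : G.N ⊕ G.E, o₁ ≠ o₂ → Disjoint (G.props o₁) (G.props o₂)

/-- A property graph schema. -/
structure PGSchema (C : Ctx) : Type 1 where
  NT : Type
  ET : Type
  PT : Type
  tlab : NT ⊕ ET → C.Lbl
  tpv : PT → C.Lbl × C.DT
  tends : ET → NT × NT
  tprops : NT ⊕ ET → Set PT

/-- Well-formedness of a property graph schema. -/
def PGSchema.WF {C : Ctx} (S : PGSchema C) : Prop :=
  Finite S.NT ∧ Finite S.ET ∧ Finite S.PT ∧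
    ∀ o₁ o₂ : S.NT ⊕ S.ET, o₁ ≠ o₂ → Disjoint (S.tprops o₁) (S.tprops o₂)

/-- Validity of a property graph w.r.t. a property graph schema (G^P ⊨ S^P). -/
def PGValid (C : Ctx) (G : PG C) (S : PGSchema C) : Prop :=
  (∀ n : G.N, ∃ nt : S.NT,
    G.lab (Sum.inl n) = S.tlab (Sum.inl nt) ∧
    ∀ p ∈ G.props (Sum.inl n), ∃ pt ∈ S.tprops (Sum.inl nt),
      S.tpv pt = ((G.pv p).1, C.typeOf (G.pv p).2)) ∧
  (∀ e : G.E, ∃ (et : S.ET) (nt nt' : S.NT),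
    S.tends et = (nt, nt') ∧
    G.lab (Sum.inr e) = S.tlab (Sum.inr et) ∧
    G.lab (Sum.inl (G.ends e).1) = S.tlab (Sum.inl nt) ∧
    G.lab (Sum.inl (G.ends e).2) = S.tlab (Sum.inl nt') ∧
    ∀ p ∈ G.props (Sum.inr e), ∃ pt ∈ S.tprops (Sum.inr et),
      S.tpv pt = ((G.pv p).1, C.typeOf (G.pv p).2))

/-- The schema mapping SM₁: a node type for each resource class not in I_DT
(each carrying the property type ('iri', String)); for each property class pc
with ϕ(pc) = (rc₁, rc₂): if φ(rc₂) ∈ I_DT, a property type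
(φ(pc), f(φ(rc₂))) attached to nt_{rc₁}; otherwise an edge type labeled φ(pc)
from nt_{rc₁} to nt_{rc₂}. -/
def SM1 (C : Ctx) (S : RDFSchema C) : PGSchema C where
  NT := {rc : S.NS // S.phiN rc ∉ C.IDT}
  ET := {pc : S.ES // S.phiN (S.dom pc) ∉ C.IDT ∧ S.phiN (S.rng pc) ∉ C.IDT}
  PT := {rc : S.NS // S.phiN rc ∉ C.IDT} ⊕
        {pc : S.ES // S.phiN (S.dom pc) ∉ C.IDT ∧ S.phiN (S.rng pc) ∈ C.IDT}
  tlab := Sum.elim (fun nt => C.iLbl (S.phiN nt.1)) (fun et => C.iLbl (S.phiE et.1))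
  tpv := Sum.elim (fun _ => (C.iriLbl, C.stringDT))
    (fun pc => (C.iLbl (S.phiE pc.1), C.f ⟨S.phiN (S.rng pc.1), pc.2.2⟩))
  tends := fun et => (⟨S.dom et.1, et.2.1⟩, ⟨S.rng et.1, et.2.2⟩)
  tprops := Sum.elim
    (fun nt => {pt | match pt with
                     | Sum.inl nt' => nt' = nt
                     | Sum.inr pc => S.dom pc.1 = nt.1})
    (fun _ => ∅)

/-- The instance mapping IM₁: a node n_r (labeled δ(r), carrying the property
('iri', α_I(r))) for each resource node r; a property (δ(dp), α_L(r₂)) on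
n_{r₁} for each datatype-property edge dp with β_D(dp) = (r₁, r₂); an edge
(labeled δ(op), from n_{r₁} to n_{r₂}) for each object-property edge op. -/
def IM1 (C : Ctx) (G : RDFGraph C) : PG C where
  N := G.NI
  E := G.EO
  P := G.NI ⊕ G.ED
  lab := Sum.elim (fun r => C.iLbl (G.dI r)) (fun op => C.iLbl (G.dO op))
  pv := Sum.elim (fun r => (C.iriLbl, C.iVal (G.aI r)))
    (fun dp => (C.iLbl (G.dD dp), C.lVal (G.aL (G.bD dp).2)))
  ends := G.bO
  props := Sum.elim
    (fun n => {p | match p with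
                   | Sum.inl r => r = n
                   | Sum.inr dp => (G.bD dp).1 = n})
    (fun _ => ∅)

/-- The inverse schema mapping SM₁⁻¹. -/
def SM1inv (C : Ctx) (T : PGSchema C) : RDFSchema C where
  NS := {dt : C.DT // ∃ pt : T.PT, (T.tpv pt).1 ≠ C.iriLbl ∧ (T.tpv pt).2 = dt} ⊕ T.NT
  ES := T.ET ⊕ {x : T.NT × T.PT // x.2 ∈ T.tprops (Sum.inl x.1) ∧ (T.tpv x.2).1 ≠ C.iriLbl}
  phiN := Sum.elim (fun dt => C.finv dt.1) (fun nt => C.lblIri (T.tlab (Sum.inl nt)))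
  phiE := Sum.elim (fun et => C.lblIri (T.tlab (Sum.inr et)))
    (fun x => C.lblIri (T.tpv x.1.2).1)
  dom := Sum.elim (fun et => Sum.inr (T.tends et).1) (fun x => Sum.inr x.1.1)
  rng := Sum.elim (fun et => Sum.inr (T.tends et).2)
    (fun x => Sum.inl ⟨(T.tpv x.1.2).2, ⟨x.1.2, x.2.2, rfl⟩⟩)

/-- The (unique, when it exists) value of the property with label `lab`
attached to the object `o`; chosen classically. -/
noncomputable def propVal (C : Ctx) (G : PG C) (o : G.N ⊕ G.E) (lab : C.Lbl) : C.Val :=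
  haveI : Nonempty C.Val := @Infinite.nonempty _ C.infVal
  Classical.epsilon (fun v => ∃ p ∈ G.props o, G.pv p = (lab, v))

/-- The inverse instance mapping IM₁⁻¹. -/
noncomputable def IM1inv (C : Ctx) (G : PG C) : RDFGraph C where
  NI := G.N
  NL := {v : C.Val // ∃ n : G.N, ∃ p ∈ G.props (Sum.inl n),
          (G.pv p).1 ≠ C.iriLbl ∧ (G.pv p).2 = v}
  EO := G.E
  ED := {x : G.N × G.P // x.2 ∈ G.props (Sum.inl x.1) ∧ (G.pv x.2).1 ≠ C.iriLbl}
  aI := fun n => C.valIri (propVal C G (Sum.inl n) C.iriLbl)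
  aL := fun v => C.valLit v.1
  bO := G.ends
  bD := fun x => (x.1.1, ⟨(G.pv x.1.2).2, ⟨x.1.1, x.1.2, x.2.1, x.2.2, rfl⟩⟩)
  dI := fun n => C.lblIri (G.lab (Sum.inl n))
  dL := fun v => C.finv (C.typeOf v.1)
  dO := fun e => C.lblIri (G.lab (Sum.inr e))
  dD := fun x => C.lblIri (G.pv x.1.2).1

/-- The instance mapping IM₂ (schema-independent). -/
def IM2 (C : Ctx) (G : RDFGraph C) : PG C where
  N := G.NI ⊕ G.NL
  E := G.EO ⊕ G.ED
  P := ((G.NI ⊕ G.NL) × Bool) ⊕ (G.EO ⊕ G.ED)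
  lab := Sum.elim
    (Sum.elim (fun _ => C.resLbl) (fun _ => C.litLbl))
    (Sum.elim (fun _ => C.objLbl) (fun _ => C.dtpLbl))
  pv := fun p => match p with
    | Sum.inl (Sum.inl r, false) => (C.iriLbl, C.iVal (G.aI r))
    | Sum.inl (Sum.inl r, true) => (C.typeLbl, C.iVal (G.dI r))
    | Sum.inl (Sum.inr l, false) => (C.valueLbl, C.lVal (G.aL l))
    | Sum.inl (Sum.inr l, true) => (C.typeLbl, C.iVal (G.dL l))
    | Sum.inr (Sum.inl op) => (C.typeLbl, C.iVal (G.dO op))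
    | Sum.inr (Sum.inr dp) => (C.typeLbl, C.iVal (G.dD dp))
  ends := Sum.elim
    (fun op => (Sum.inl (G.bO op).1, Sum.inl (G.bO op).2))
    (fun dp => (Sum.inl (G.bD dp).1, Sum.inr (G.bD dp).2))
  props := Sum.elim
    (fun n => {p | ∃ b, p = Sum.inl (n, b)})
    (fun e => {p | p = Sum.inr e})

/-- The generic property graph schema S*: node types `Resource` (false) and
`Literal` (true); edge types `ObjectProperty` (false) and `DatatypeProperty`
(true); property types 0 = ('iri',String), 1 = ('type',String) on Resource,
2 = ('value',String), 3 = ('type',String) on Literal, 4 = ('type',String) on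
ObjectProperty, 5 = ('type',String) on DatatypeProperty. -/
def genericSchema (C : Ctx) : PGSchema C where
  NT := Bool
  ET := Bool
  PT := Fin 6
  tlab := Sum.elim (fun b => cond b C.litLbl C.resLbl)
    (fun b => cond b C.dtpLbl C.objLbl)
  tpv := fun i =>
    (if i = 0 then C.iriLbl else if i = 2 then C.valueLbl else C.typeLbl, C.stringDT)
  tends := fun b => (false, b)
  tprops := Sum.elim
    (fun b => cond b ({2, 3} : Set (Fin 6)) ({0, 1} : Set (Fin 6)))
    (fun b => cond b ({5} : Set (Fin 6)) ({4} : Set (Fin 6)))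

theorem valid_src (C : Ctx) (G : PG C) (hv : PGValid C G (genericSchema C)) (e : G.E) :
    G.lab (Sum.inl (G.ends e).1) = C.resLbl := by
  obtain ⟨et, nt, nt', hends, _, h1, _, _⟩ := hv.2 e
  have hnt : nt = false := by
    have h := congrArg Prod.fst hends
    simpa [genericSchema] using h.symm
  subst hnt
  simpa [genericSchema] using h1

theorem valid_tgt_obj (C : Ctx) (G : PG C) (hv : PGValid C G (genericSchema C)) (e : G.E)
    (he : G.lab (Sum.inr e) = C.objLbl) :
    G.lab (Sum.inl (G.ends e).2) = C.resLbl := by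
  obtain ⟨et, nt, nt', hends, hlabe, _, h2, _⟩ := hv.2 e
  have h : et = nt' := by
    have h := congrArg Prod.snd hends
    simpa [genericSchema] using h
  cases et with
  | true =>
      exfalso
      apply C.obj_ne_dtp
      rw [← he, hlabe]
      simp [genericSchema]
  | false =>
      rw [← h] at h2
      simpa [genericSchema] using h2

theorem valid_tgt_dtp (C : Ctx) (G : PG C) (hv : PGValid C G (genericSchema C)) (e : G.E)
    (he : G.lab (Sum.inr e) = C.dtpLbl) :
    G.lab (Sum.inl (G.ends e).2) = C.litLbl := by
  obtain ⟨et, nt, nt', hends, hlabe, _, h2, _⟩ := hv.2 e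
  have h : et = nt' := by
    have h := congrArg Prod.snd hends
    simpa [genericSchema] using h
  cases et with
  | false =>
      exfalso
      apply C.obj_ne_dtp
      have : G.lab (Sum.inr e) = C.objLbl := by
        rw [hlabe]; simp [genericSchema]
      rw [← this, he]
  | true =>
      rw [← h] at h2
      simpa [genericSchema] using h2

/-- The inverse instance mapping IM₂⁻¹, defined on property graphs that are
valid with respect to the generic schema S*. -/
noncomputable def IM2inv (C : Ctx) (G : PG C) (hv : PGValid C G (genericSchema C)) :
    RDFGraph C where
  NI := {n : G.N // G.lab (Sum.inl n) = C.resLbl}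
  NL := {n : G.N // G.lab (Sum.inl n) = C.litLbl}
  EO := {e : G.E // G.lab (Sum.inr e) = C.objLbl}
  ED := {e : G.E // G.lab (Sum.inr e) = C.dtpLbl}
  aI := fun n => C.valIri (propVal C G (Sum.inl n.1) C.iriLbl)
  aL := fun n => C.valLit (propVal C G (Sum.inl n.1) C.valueLbl)
  bO := fun e => (⟨(G.ends e.1).1, valid_src C G hv e.1⟩,
                  ⟨(G.ends e.1).2, valid_tgt_obj C G hv e.1 e.2⟩)
  bD := fun e => (⟨(G.ends e.1).1, valid_src C G hv e.1⟩,
                  ⟨(G.ends e.1).2, valid_tgt_dtp C G hv e.1 e.2⟩)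
  dI := fun n => C.valIri (propVal C G (Sum.inl n.1) C.typeLbl)
  dL := fun n => C.valIri (propVal C G (Sum.inl n.1) C.typeLbl)
  dO := fun e => C.valIri (propVal C G (Sum.inr e.1) C.typeLbl)
  dD := fun e => C.valIri (propVal C G (Sum.inr e.1) C.typeLbl)

/-- An isomorphism of RDF graphs: bijections between the corresponding node
and edge sets commuting with α_I, α_L, β_O, β_D and δ. -/
structure RDFIso (C : Ctx) (G₁ G₂ : RDFGraph C) : Type where
  eNI : G₁.NI ≃ G₂.NI
  eNL : G₁.NL ≃ G₂.NL
  eEO : G₁.EO ≃ G₂.EO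
  eED : G₁.ED ≃ G₂.ED
  haI : ∀ r, G₂.aI (eNI r) = G₁.aI r
  haL : ∀ l, G₂.aL (eNL l) = G₁.aL l
  hbO : ∀ e, G₂.bO (eEO e) = (eNI (G₁.bO e).1, eNI (G₁.bO e).2)
  hbD : ∀ e, G₂.bD (eED e) = (eNI (G₁.bD e).1, eNL (G₁.bD e).2)
  hdI : ∀ r, G₂.dI (eNI r) = G₁.dI r
  hdL : ∀ l, G₂.dL (eNL l) = G₁.dL l
  hdO : ∀ e, G₂.dO (eEO e) = G₁.dO e
  hdD : ∀ e, G₂.dD (eED e) = G₁.dD e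

/-- An isomorphism of RDF graph schemas: bijections on resource classes and
property classes commuting with φ and ϕ. -/
structure RDFSchemaIso (C : Ctx) (S₁ S₂ : RDFSchema C) : Type where
  eNS : S₁.NS ≃ S₂.NS
  eES : S₁.ES ≃ S₂.ES
  hphiN : ∀ rc, S₂.phiN (eNS rc) = S₁.phiN rc
  hphiE : ∀ pc, S₂.phiE (eES pc) = S₁.phiE pc
  hdom : ∀ pc, S₂.dom (eES pc) = eNS (S₁.dom pc)
  hrng : ∀ pc, S₂.rng (eES pc) = eNS (S₁.rng pc)

/-- An isomorphism of property graphs: bijections on nodes, edges and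
properties commuting with Γ, Υ, Σ and Δ. -/
structure PGIso (C : Ctx) (G₁ G₂ : PG C) : Type where
  eN : G₁.N ≃ G₂.N
  eE : G₁.E ≃ G₂.E
  eP : G₁.P ≃ G₂.P
  hlab : ∀ o, G₂.lab (Equiv.sumCongr eN eE o) = G₁.lab o
  hpv : ∀ p, G₂.pv (eP p) = G₁.pv p
  hends : ∀ e, G₂.ends (eE e) = (eN (G₁.ends e).1, eN (G₁.ends e).2)
  hprops : ∀ o p, eP p ∈ G₂.props (Equiv.sumCongr eN eE o) ↔ p ∈ G₁.props o

/-- An isomorphism of property graph schemas: bijections on node types, edge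
types and property types commuting with Θ, Π, Φ and Ψ. -/
structure PGSchemaIso (C : Ctx) (S₁ S₂ : PGSchema C) : Type where
  eNT : S₁.NT ≃ S₂.NT
  eET : S₁.ET ≃ S₂.ET
  ePT : S₁.PT ≃ S₂.PT
  htlab : ∀ o, S₂.tlab (Equiv.sumCongr eNT eET o) = S₁.tlab o
  htpv : ∀ pt, S₂.tpv (ePT pt) = S₁.tpv pt
  htends : ∀ et, S₂.tends (eET et) = (eNT (S₁.tends et).1, eNT (S₁.tends et).2)
  htprops : ∀ o pt, ePT pt ∈ S₂.tprops (Equiv.sumCongr eNT eET o) ↔ pt ∈ S₁.tprops o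

/-! A property graph is valid for a schema as soon as it admits a typing: maps sending nodes, edges
and properties to node, edge and property types that commute with labels, endpoints, property
sets and (up to `typeOf`) property values. `IM₂` is typed against `S*` by the tag of each element
(resource or literal, object or datatype property, and the slot of each property), and the
hypotheses on `typeOf` make every property value a `String`. Disjointness of `Δ` holds because
every property of `IM₂(G^R)` is created for exactly one node or edge. -/

theorem pairwise_disjoint_of_subset_fiber {α β : Type*} {s : α → Set β} (owner : β → α)
    (h : ∀ a, s a ⊆ owner ⁻¹' {a}) : Pairwise fun a b => Disjoint (s a) (s b) :=
  fun _ _ hab => (pairwise_disjoint_fiber owner hab).mono (h _) (h _)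

theorem PGValid.of_typing {C : Ctx} {G : PG C} {S : PGSchema C} (ν : G.N → S.NT)
    (ε : G.E → S.ET) (π : G.P → S.PT) (hlab : ∀ o, S.tlab (Sum.map ν ε o) = G.lab o)
    (hends : ∀ e, S.tends (ε e) = (ν (G.ends e).1, ν (G.ends e).2))
    (hprops : ∀ o, ∀ p ∈ G.props o, π p ∈ S.tprops (Sum.map ν ε o))
    (hpv : ∀ p, S.tpv (π p) = ((G.pv p).1, C.typeOf (G.pv p).2)) :
    PGValid C G S := by
  refine ⟨fun n => ⟨ν n, (hlab (.inl n)).symm, fun p hp => ⟨π p, hprops _ p hp, hpv p⟩⟩,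
    fun e => ⟨ε e, ν (G.ends e).1, ν (G.ends e).2, hends e, (hlab (.inr e)).symm,
      (hlab (.inl _)).symm, (hlab (.inl _)).symm, fun p hp => ⟨π p, hprops _ p hp, hpv p⟩⟩⟩

def genericSchema.propTypeOwner : Fin 6 → Bool ⊕ Bool :=
  ![.inl false, .inl false, .inl true, .inl true, .inr false, .inr true]

theorem genericSchema_wf (C : Ctx) : (genericSchema C).WF := by
  refine ⟨inferInstanceAs (Finite Bool), inferInstanceAs (Finite Bool),
    inferInstanceAs (Finite (Fin 6)), pairwise_disjoint_of_subset_fiber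
      genericSchema.propTypeOwner ?_⟩
  rintro (b | b) i hi <;> cases b <;> simp [genericSchema] at hi <;> rcases hi with rfl | rfl <;> rfl

namespace IM2

variable (C : Ctx) (G : RDFGraph C)

def propOwner : (IM2 C G).P → (IM2 C G).N ⊕ (IM2 C G).E :=
  Sum.elim (fun x => .inl x.1) .inr

def propType : (IM2 C G).P → Fin 6
  | .inl (.inl _, false) => 0
  | .inl (.inl _, true) => 1
  | .inl (.inr _, false) => 2
  | .inl (.inr _, true) => 3
  | .inr (.inl _) => 4
  | .inr (.inr _) => 5

theorem props_subset_fiber_propOwner (o : (IM2 C G).N ⊕ (IM2 C G).E) :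
    (IM2 C G).props o ⊆ propOwner C G ⁻¹' {o} := by
  rcases o with n | e
  · rintro _ ⟨b, rfl⟩
    rfl
  · rintro _ rfl
    rfl

theorem wf [Finite G.NI] [Finite G.NL] [Finite G.EO] [Finite G.ED] : (IM2 C G).WF :=
  ⟨inferInstanceAs (Finite (G.NI ⊕ G.NL)), inferInstanceAs (Finite (G.EO ⊕ G.ED)),
    inferInstanceAs (Finite (((G.NI ⊕ G.NL) × Bool) ⊕ (G.EO ⊕ G.ED))),
    pairwise_disjoint_of_subset_fiber (propOwner C G) (props_subset_fiber_propOwner C G)⟩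

theorem typeOf_pv_eq_string (hiri_type : ∀ i : C.Iri, C.typeOf (C.iVal i) = C.stringDT)
    (hlit_type : ∀ l : C.Lit, C.typeOf (C.lVal l) = C.stringDT) (p : (IM2 C G).P) :
    C.typeOf ((IM2 C G).pv p).2 = C.stringDT := by
  rcases p with ⟨_ | _, _ | _⟩ | _ | _ <;> simp only [IM2, hiri_type, hlit_type]

theorem tpv_propType (p : (IM2 C G).P) :
    (genericSchema C).tpv (propType C G p) = (((IM2 C G).pv p).1, C.stringDT) := by
  rcases p with ⟨_ | _, _ | _⟩ | _ | _ <;> rfl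

theorem propType_mem_tprops_propOwner (p : (IM2 C G).P) :
    propType C G p ∈
      (genericSchema C).tprops (Sum.map Sum.isRight Sum.isRight (propOwner C G p)) := by
  rcases p with ⟨_ | _, _ | _⟩ | _ | _ <;> simp [IM2, genericSchema, propOwner, propType] <;> tauto

theorem propType_mem_tprops (o : (IM2 C G).N ⊕ (IM2 C G).E) (p : (IM2 C G).P)
    (hp : p ∈ (IM2 C G).props o) :
    propType C G p ∈ (genericSchema C).tprops (Sum.map Sum.isRight Sum.isRight o) := by
  obtain rfl := props_subset_fiber_propOwner C G o hp
  exact propType_mem_tprops_propOwner C G p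

theorem valid_genericSchema (hiri_type : ∀ i : C.Iri, C.typeOf (C.iVal i) = C.stringDT)
    (hlit_type : ∀ l : C.Lit, C.typeOf (C.lVal l) = C.stringDT) :
    PGValid C (IM2 C G) (genericSchema C) := by
  refine PGValid.of_typing Sum.isRight Sum.isRight (propType C G) ?_ ?_
    (propType_mem_tprops C G) ?_
  · rintro ((_ | _) | (_ | _)) <;> rfl
  · rintro (_ | _) <;> rfl
  · intro p
    rw [tpv_propType, typeOf_pv_eq_string C G hiri_type hlit_type]

end IM2

/-- The database mapping DM₂ = (SM₂, IM₂) is semantics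
preserving: for every RDF graph G^R, assuming type(v) = String for every IRI
and every literal v regarded as a value, IM₂(G^R) is a well-formed property
graph and is valid with respect to the generic property graph schema S*;
hence (S*, IM₂(G^R)) is a valid property graph database. -/
theorem dm2_semantics_preserving (C : Ctx) (G : RDFGraph C) (hG : G.WF)
    (hiri_type : ∀ i : C.Iri, C.typeOf (C.iVal i) = C.stringDT)
    (hlit_type : ∀ l : C.Lit, C.typeOf (C.lVal l) = C.stringDT) :
    (IM2 C G).WF ∧ (genericSchema C).WF ∧
      PGValid C (IM2 C G) (genericSchema C) := by
  obtain ⟨_, _, _, _, -, -⟩ := hG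
  exact ⟨IM2.wf C G, genericSchema_wf C, IM2.valid_genericSchema C G hiri_type hlit_type⟩
end

section
/- Instance recovery for DM₂: for every RDF graph G^R, the RDF graph IM₂⁻¹(IM₂(G^R)) is isomorphic to G^R, i.e., there are bijections between the resource nodes, literal nodes, object-property edges and datatype-property edges of IM₂⁻¹(IM₂(G^R)) and those of G^R commuting with α_I, α_L, β_O, β_D and δ. -/
/-! IM₂ gives resources, literals, object properties and datatype properties
four distinct labels, so IM₂⁻¹ finds each element again in the summand it came
from. The two properties of a node have distinct keys and an edge has a single
property, so each key read back by IM₂⁻¹ has exactly the value IM₂ stored. -/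

theorem Sum.elim_const_eq_left_iff {α β γ : Type*} {a b : γ} (hab : a ≠ b) (x : α ⊕ β) :
    Sum.elim (fun _ => a) (fun _ => b) x = a ↔ x.isLeft := by
  cases x <;> simp [hab.symm]

theorem Sum.elim_const_eq_right_iff {α β γ : Type*} {a b : γ} (hab : a ≠ b) (x : α ⊕ β) :
    Sum.elim (fun _ => a) (fun _ => b) x = b ↔ x.isRight := by
  cases x <;> simp [hab]

def Equiv.sumElimConstLeft {α β γ : Type*} {a b : γ} (hab : a ≠ b) :
    {x : α ⊕ β // Sum.elim (fun _ => a) (fun _ => b) x = a} ≃ α :=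
  (Equiv.subtypeEquivRight (Sum.elim_const_eq_left_iff hab)).trans Equiv.sumIsLeft

def Equiv.sumElimConstRight {α β γ : Type*} {a b : γ} (hab : a ≠ b) :
    {x : α ⊕ β // Sum.elim (fun _ => a) (fun _ => b) x = b} ≃ β :=
  (Equiv.subtypeEquivRight (Sum.elim_const_eq_right_iff hab)).trans Equiv.sumIsRight

def RDFIso.symm {C : Ctx} {G₁ G₂ : RDFGraph C} (φ : RDFIso C G₁ G₂) : RDFIso C G₂ G₁ where
  eNI := φ.eNI.symm
  eNL := φ.eNL.symm
  eEO := φ.eEO.symm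
  eED := φ.eED.symm
  haI r := by rw [← φ.haI, Equiv.apply_symm_apply]
  haL l := by rw [← φ.haL, Equiv.apply_symm_apply]
  hbO e := by
    obtain ⟨e, rfl⟩ := φ.eEO.surjective e
    simp [φ.hbO]
  hbD e := by
    obtain ⟨e, rfl⟩ := φ.eED.surjective e
    simp [φ.hbD]
  hdI r := by rw [← φ.hdI, Equiv.apply_symm_apply]
  hdL l := by rw [← φ.hdL, Equiv.apply_symm_apply]
  hdO e := by rw [← φ.hdO, Equiv.apply_symm_apply]
  hdD e := by rw [← φ.hdD, Equiv.apply_symm_apply]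

theorem propVal_eq {C : Ctx} {G : PG C} {o : G.N ⊕ G.E} {lab : C.Lbl} {v : C.Val}
    (hex : ∃ p ∈ G.props o, G.pv p = (lab, v))
    (huniq : ∀ p ∈ G.props o, (G.pv p).1 = lab → (G.pv p).2 = v) :
    propVal C G o lab = v := by
  obtain ⟨p, hp, hpv⟩ := Classical.epsilon_spec (p := fun w => ∃ p ∈ G.props o, G.pv p = (lab, w))
    ⟨v, hex⟩
  have hval := huniq p hp (congrArg Prod.fst hpv)
  rw [hpv] at hval
  exact hval

section IM2

variable {C : Ctx} {G : RDFGraph C}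

theorem propVal_IM2_node (n : G.NI ⊕ G.NL) (b : Bool)
    (hne : ((IM2 C G).pv (.inl (n, !b))).1 ≠ ((IM2 C G).pv (.inl (n, b))).1) :
    propVal C (IM2 C G) (.inl n) ((IM2 C G).pv (.inl (n, b))).1 =
      ((IM2 C G).pv (.inl (n, b))).2 := by
  refine propVal_eq ⟨_, ⟨b, rfl⟩, rfl⟩ ?_
  rintro _ ⟨b', rfl⟩ hlab
  obtain rfl | rfl := Bool.eq_or_eq_not b' b
  · rfl
  · exact absurd hlab hne

theorem propVal_IM2_edge (e : G.EO ⊕ G.ED) :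
    propVal C (IM2 C G) (.inr e) ((IM2 C G).pv (.inr e)).1 = ((IM2 C G).pv (.inr e)).2 :=
  propVal_eq ⟨_, rfl, rfl⟩ fun _ hp _ => by rw [hp]

end IM2

noncomputable def im2RoundTripIso (C : Ctx) (G : RDFGraph C)
    (hv : PGValid C (IM2 C G) (genericSchema C)) : RDFIso C G (IM2inv C (IM2 C G) hv) where
  eNI := (Equiv.sumElimConstLeft C.res_ne_lit).symm
  eNL := (Equiv.sumElimConstRight C.res_ne_lit).symm
  eEO := (Equiv.sumElimConstLeft C.obj_ne_dtp).symm
  eED := (Equiv.sumElimConstRight C.obj_ne_dtp).symm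
  haI r := (congrArg C.valIri (propVal_IM2_node (.inl r) false C.iri_ne_type.symm)).trans
    (C.valIri_iVal _)
  haL l := (congrArg C.valLit (propVal_IM2_node (.inr l) false C.type_ne_value)).trans
    (C.valLit_lVal _)
  hbO _ := rfl
  hbD _ := rfl
  hdI r := (congrArg C.valIri (propVal_IM2_node (.inl r) true C.iri_ne_type)).trans
    (C.valIri_iVal _)
  hdL l := (congrArg C.valIri (propVal_IM2_node (.inr l) true C.type_ne_value.symm)).trans
    (C.valIri_iVal _)
  hdO e := (congrArg C.valIri (propVal_IM2_edge (.inl e))).trans (C.valIri_iVal _)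
  hdD e := (congrArg C.valIri (propVal_IM2_edge (.inr e))).trans (C.valIri_iVal _)

theorem im2_instance_recovery_general (C : Ctx) (G : RDFGraph C)
    (hv : PGValid C (IM2 C G) (genericSchema C)) :
    Nonempty (RDFIso C (IM2inv C (IM2 C G) hv) G) :=
  ⟨(im2RoundTripIso C G hv).symm⟩

/-- Instance recovery for DM₂: for every RDF graph G^R (whose
image IM₂(G^R) is valid with respect to the generic schema S*, on which
IM₂⁻¹ is defined), the RDF graph IM₂⁻¹(IM₂(G^R)) is isomorphic to G^R. -/
theorem im2_instance_recovery (C : Ctx) (G : RDFGraph C) (hG : G.WF)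
    (hv : PGValid C (IM2 C G) (genericSchema C)) :
    Nonempty (RDFIso C (IM2inv C (IM2 C G) hv) G) :=
  im2_instance_recovery_general C G hv
end

section
/- The instance mapping IM₂ is injective up to isomorphism: if G₁ and G₂ are RDF graphs such that the property graphs IM₂(G₁) and IM₂(G₂) are isomorphic, then G₁ and G₂ are isomorphic as RDF graphs. -/
/-! The node, edge and property labels of `IM₂(G)` record which of the four kinds of
components of `G` each element comes from, and the `iri`/`value`/`type` properties record
α and δ. A property-graph isomorphism preserves labels and properties, so it splits into
bijections between the four kinds of components that preserve α, β and δ. -/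

theorem Equiv.exists_eq_sumCongr {α₁ β₁ α₂ β₂ : Type*} (e : α₁ ⊕ β₁ ≃ α₂ ⊕ β₂)
    (h : ∀ x, (e x).isLeft = x.isLeft) :
    ∃ (ea : α₁ ≃ α₂) (eb : β₁ ≃ β₂), e = ea.sumCongr eb := by
  refine ⟨sumIsLeft.symm.trans ((e.subtypeEquiv fun x => by rw [h]).trans sumIsLeft),
    sumIsRight.symm.trans ((e.subtypeEquiv fun x => by
      rw [← Sum.not_isLeft, ← Sum.not_isLeft, h]).trans sumIsRight), ?_⟩
  ext x
  cases x <;> simp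

def PG.HasProp {C : Ctx} (G : PG C) (o : G.N ⊕ G.E) (x : C.Lbl × C.Val) : Prop :=
  ∃ p ∈ G.props o, G.pv p = x

theorem PGIso.hasProp_iff {C : Ctx} {G₁ G₂ : PG C} (i : PGIso C G₁ G₂) (o : G₁.N ⊕ G₁.E)
    (x : C.Lbl × C.Val) : G₂.HasProp (Equiv.sumCongr i.eN i.eE o) x ↔ G₁.HasProp o x := by
  constructor
  · rintro ⟨p, hp, hpx⟩
    refine ⟨i.eP.symm p, (i.hprops o _).1 ?_, ?_⟩
    · rwa [i.eP.apply_symm_apply]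
    · rw [← i.hpv, i.eP.apply_symm_apply, hpx]
  · rintro ⟨p, hp, hpx⟩
    exact ⟨i.eP p, (i.hprops o p).2 hp, (i.hpv p).trans hpx⟩

section IM2

variable {C : Ctx} {G : RDFGraph C}

theorem im2_lab_node_eq_resLbl_iff (n : G.NI ⊕ G.NL) :
    (IM2 C G).lab (Sum.inl n) = C.resLbl ↔ n.isLeft := by
  cases n <;> simp [IM2, C.res_ne_lit.symm]

theorem im2_lab_edge_eq_objLbl_iff (e : G.EO ⊕ G.ED) :
    (IM2 C G).lab (Sum.inr e) = C.objLbl ↔ e.isLeft := by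
  cases e <;> simp [IM2, C.obj_ne_dtp.symm]

theorem im2_hasProp_node_iff (n : G.NI ⊕ G.NL) (x : C.Lbl × C.Val) :
    (IM2 C G).HasProp (Sum.inl n) x ↔ ∃ b, (IM2 C G).pv (Sum.inl (n, b)) = x := by
  constructor
  · rintro ⟨_, ⟨b, rfl⟩, hx⟩
    exact ⟨b, hx⟩
  · rintro ⟨b, hx⟩
    exact ⟨_, ⟨b, rfl⟩, hx⟩

theorem im2_hasProp_edge_iff (e : G.EO ⊕ G.ED) (x : C.Lbl × C.Val) :
    (IM2 C G).HasProp (Sum.inr e) x ↔ (IM2 C G).pv (Sum.inr e) = x :=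
  ⟨fun ⟨_, hp, hx⟩ => (Set.mem_singleton_iff.1 hp) ▸ hx, fun hx => ⟨_, rfl, hx⟩⟩

theorem im2_hasProp_resource_iri (r : G.NI) (v : C.Val) :
    (IM2 C G).HasProp (Sum.inl (Sum.inl r)) (C.iriLbl, v) ↔ C.iVal (G.aI r) = v := by
  rw [im2_hasProp_node_iff, Bool.exists_bool]
  simp [IM2, C.iri_ne_type.symm]

theorem im2_hasProp_resource_type (r : G.NI) (v : C.Val) :
    (IM2 C G).HasProp (Sum.inl (Sum.inl r)) (C.typeLbl, v) ↔ C.iVal (G.dI r) = v := by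
  rw [im2_hasProp_node_iff, Bool.exists_bool]
  simp [IM2, C.iri_ne_type]

theorem im2_hasProp_literal_value (l : G.NL) (v : C.Val) :
    (IM2 C G).HasProp (Sum.inl (Sum.inr l)) (C.valueLbl, v) ↔ C.lVal (G.aL l) = v := by
  rw [im2_hasProp_node_iff, Bool.exists_bool]
  simp [IM2, C.type_ne_value]

theorem im2_hasProp_literal_type (l : G.NL) (v : C.Val) :
    (IM2 C G).HasProp (Sum.inl (Sum.inr l)) (C.typeLbl, v) ↔ C.iVal (G.dL l) = v := by
  rw [im2_hasProp_node_iff, Bool.exists_bool]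
  simp [IM2, C.type_ne_value.symm]

theorem im2_hasProp_objectProperty_type (op : G.EO) (v : C.Val) :
    (IM2 C G).HasProp (Sum.inr (Sum.inl op)) (C.typeLbl, v) ↔ C.iVal (G.dO op) = v := by
  rw [im2_hasProp_edge_iff]
  simp [IM2]

theorem im2_hasProp_datatypeProperty_type (dp : G.ED) (v : C.Val) :
    (IM2 C G).HasProp (Sum.inr (Sum.inr dp)) (C.typeLbl, v) ↔ C.iVal (G.dD dp) = v := by
  rw [im2_hasProp_edge_iff]
  simp [IM2]

variable {G₁ G₂ : RDFGraph C} (i : PGIso C (IM2 C G₁) (IM2 C G₂))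

theorem PGIso.isLeft_eN_of_im2 (n : G₁.NI ⊕ G₁.NL) : (i.eN n).isLeft = n.isLeft :=
  Bool.eq_iff_iff.2 <| (im2_lab_node_eq_resLbl_iff (i.eN n)).symm.trans <|
    (Eq.congr_left (i.hlab (.inl n))).trans (im2_lab_node_eq_resLbl_iff n)

theorem PGIso.isLeft_eE_of_im2 (e : G₁.EO ⊕ G₁.ED) : (i.eE e).isLeft = e.isLeft :=
  Bool.eq_iff_iff.2 <| (im2_lab_edge_eq_objLbl_iff (i.eE e)).symm.trans <|
    (Eq.congr_left (i.hlab (.inr e))).trans (im2_lab_edge_eq_objLbl_iff e)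

end IM2

theorem im2_injective_up_to_iso_general (C : Ctx) (G₁ G₂ : RDFGraph C)
    (h : Nonempty (PGIso C (IM2 C G₁) (IM2 C G₂))) :
    Nonempty (RDFIso C G₁ G₂) := by
  obtain ⟨i⟩ := h
  obtain ⟨eNI, eNL, hN⟩ := i.eN.exists_eq_sumCongr i.isLeft_eN_of_im2
  obtain ⟨eEO, eED, hE⟩ := i.eE.exists_eq_sumCongr i.isLeft_eE_of_im2
  have hprop := i.hasProp_iff
  have hends := i.hends
  simp only [hN, hE] at hprop hends
  refine ⟨⟨eNI, eNL, eEO, eED, fun r => ?_, fun l => ?_, fun e => ?_, fun e => ?_,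
    fun r => ?_, fun l => ?_, fun e => ?_, fun e => ?_⟩⟩
  · exact C.iVal_inj <| (im2_hasProp_resource_iri _ _).1 <|
      (hprop (.inl (.inl r)) _).2 <| (im2_hasProp_resource_iri _ _).2 rfl
  · exact C.lVal_inj <| (im2_hasProp_literal_value _ _).1 <|
      (hprop (.inl (.inr l)) _).2 <| (im2_hasProp_literal_value _ _).2 rfl
  · exact Prod.ext (Sum.inl_injective (congrArg Prod.fst (hends (.inl e))))
      (Sum.inl_injective (congrArg Prod.snd (hends (.inl e))))
  · exact Prod.ext (Sum.inl_injective (congrArg Prod.fst (hends (.inr e))))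
      (Sum.inr_injective (congrArg Prod.snd (hends (.inr e))))
  · exact C.iVal_inj <| (im2_hasProp_resource_type _ _).1 <|
      (hprop (.inl (.inl r)) _).2 <| (im2_hasProp_resource_type _ _).2 rfl
  · exact C.iVal_inj <| (im2_hasProp_literal_type _ _).1 <|
      (hprop (.inl (.inr l)) _).2 <| (im2_hasProp_literal_type _ _).2 rfl
  · exact C.iVal_inj <| (im2_hasProp_objectProperty_type _ _).1 <|
      (hprop (.inr (.inl e)) _).2 <| (im2_hasProp_objectProperty_type _ _).2 rfl
  · exact C.iVal_inj <| (im2_hasProp_datatypeProperty_type _ _).1 <|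
      (hprop (.inr (.inr e)) _).2 <| (im2_hasProp_datatypeProperty_type _ _).2 rfl

/-- The instance mapping IM₂ is injective up to isomorphism: if
the property graphs IM₂(G₁) and IM₂(G₂) are isomorphic, then G₁ and G₂ are
isomorphic as RDF graphs. -/
theorem im2_injective_up_to_iso (C : Ctx) (G₁ G₂ : RDFGraph C)
    (h₁ : G₁.WF) (h₂ : G₂.WF)
    (h : Nonempty (PGIso C (IM2 C G₁) (IM2 C G₂))) :
    Nonempty (RDFIso C G₁ G₂) :=
  im2_injective_up_to_iso_general C G₁ G₂ h
end
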